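/- arXiv:2411.10502 — 2 statements merged into one kernel-verified Lean document; each statement's English description precedes it below -/
import Mathlib

section
/- For every integer k ≥ 3, a(k) = (a(k−1)·k·(k+5) + 2·a(k−3)·(k+3)) / ((k+6)·(k+1)); in particular a(k) is a weighted average of a(k−1) and a(k−3) with positive weights summing to 1. -/
/-- `pq n = (p n, q n)` where `p n` (resp. `q n`) is the probability that the
exploitative player X, always guessing `2` or `n-1`, wins the misère search game
`MS(P_n)` against the uniformly random player R when playing first (resp. second):
`p 0 = p 1 = 0`, `q 0 = 0`,
`q n = (1/n) * ∑_{i=1}^{n} ((i-1)·p(i-1) + (n-i)·p(n-i) + 1)/n` for `n ≥ 1`, and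
`p n = 1/n + ((n-2)/n) * q (n-2)` for `n ≥ 2`. -/
noncomputable def pq : ℕ → ℝ × ℝ
  | 0 => (0, 0)
  | 1 =>
    (0,
      (1 / ((1 : ℕ) : ℝ)) * ∑ i ∈ (Finset.Icc 1 1).attach,
        (((i.1 - 1 : ℕ) : ℝ) * (pq (i.1 - 1)).1 +
          ((1 - i.1 : ℕ) : ℝ) * (pq (1 - i.1)).1 + 1) / ((1 : ℕ) : ℝ))
  | n + 2 =>
    (1 / ((n : ℝ) + 2) + ((n : ℝ) / ((n : ℝ) + 2)) * (pq n).2,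
      (1 / ((n : ℝ) + 2)) * ∑ i ∈ (Finset.Icc 1 (n + 2)).attach,
        (((i.1 - 1 : ℕ) : ℝ) * (pq (i.1 - 1)).1 +
          ((n + 2 - i.1 : ℕ) : ℝ) * (pq (n + 2 - i.1)).1 + 1) / ((n : ℝ) + 2))
  decreasing_by
  · have hm := i.2; simp only [Finset.mem_Icc] at hm; omega
  · have hm := i.2; simp only [Finset.mem_Icc] at hm; omega
  · omega
  · have hm := i.2; simp only [Finset.mem_Icc] at hm; omega
  · have hm := i.2; simp only [Finset.mem_Icc] at hm; omega

/-- X's winning probability in `MS(P_n)` playing first. -/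
noncomputable def p (n : ℕ) : ℝ := (pq n).1

/-- X's winning probability in `MS(P_n)` playing second. -/
noncomputable def q (n : ℕ) : ℝ := (pq n).2

/-- `s n = ∑_{i=1}^{n} i * p i`. -/
noncomputable def s (n : ℕ) : ℝ := ∑ i ∈ Finset.Icc 1 n, (i : ℝ) * p i

/-- `a k = (s k + 2(k+1)) / (k² + 7k + 6)`. -/
noncomputable def a (k : ℕ) : ℝ :=
  (s k + 2 * ((k : ℝ) + 1)) / ((k : ℝ) ^ 2 + 7 * (k : ℝ) + 6)

/-- `b k` is the maximum absolute difference between any two of `a k, a (k+1), a (k+2)`. -/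
noncomputable def b (k : ℕ) : ℝ :=
  max |a k - a (k + 1)| (max |a (k + 1) - a (k + 2)| |a k - a (k + 2)|)

/-!
In `MS(P_{n+2})`, X's guess `2` either forces R onto a mine at `1` or leaves R to move on a
path of `n` vertices, so `(n + 2) p(n + 2) = 1 + n q(n)`, and
pairing the terms `i` and `n + 2 - i` in the sum defining `q` gives
`(n + 1)² q(n + 1) = 2 s(n) + n + 1`. Together these yield
`s(m + 3) = s(m + 2) + 2 + 2 s(m) / (m + 1)`, which is the recurrence for
`(k + 1)(k + 6) a(k) = s(k) + 2(k + 1)`.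
-/

open Finset

lemma q_succ_eq_sum (n : ℕ) :
    q (n + 1) = 1 / ((n : ℝ) + 1) * ∑ i ∈ Icc 1 (n + 1),
      (((i - 1 : ℕ) : ℝ) * p (i - 1) + ((n + 1 - i : ℕ) : ℝ) * p (n + 1 - i) + 1) /
        ((n : ℝ) + 1) := by
  rcases n with _ | n
  · rw [q, pq, sum_attach (Icc 1 1) (fun i => (((i - 1 : ℕ) : ℝ) * (pq (i - 1)).1 +
      ((1 - i : ℕ) : ℝ) * (pq (1 - i)).1 + 1) / ((1 : ℕ) : ℝ))]
    simp
  · rw [q, pq, sum_attach (Icc 1 (n + 2)) (fun i => (((i - 1 : ℕ) : ℝ) * (pq (i - 1)).1 +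
      ((n + 2 - i : ℕ) : ℝ) * (pq (n + 2 - i)).1 + 1) / ((n : ℝ) + 2))]
    push_cast
    rw [show (n : ℝ) + 1 + 1 = n + 2 by ring]
    rfl

lemma p_add_two (n : ℕ) : p (n + 2) = 1 / ((n : ℝ) + 2) + (n : ℝ) / ((n : ℝ) + 2) * q n := by
  rw [p, pq, q]

lemma s_eq_sum_range (n : ℕ) : s n = ∑ j ∈ range (n + 1), (j : ℝ) * p j := by
  rw [s, ← Ico_add_one_right_eq_Icc, sum_Ico_eq_sum_range, sum_range_succ']
  simp [add_comm]

lemma q_succ (n : ℕ) : q (n + 1) = (2 * s n + ((n : ℝ) + 1)) / ((n : ℝ) + 1) ^ 2 := by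
  have hsum : ∑ i ∈ Icc 1 (n + 1),
      (((i - 1 : ℕ) : ℝ) * p (i - 1) + ((n + 1 - i : ℕ) : ℝ) * p (n + 1 - i) + 1)
      = 2 * s n + ((n : ℝ) + 1) := by
    rw [← Ico_add_one_right_eq_Icc, sum_Ico_eq_sum_range, sum_add_distrib, sum_add_distrib]
    have hreflect := sum_range_reflect (fun j => (j : ℝ) * p j) (n + 1)
    simp only [add_tsub_cancel_left, add_tsub_cancel_right, ← Nat.sub_sub] at hreflect ⊢
    rw [hreflect, ← s_eq_sum_range, sum_const, card_range]
    ring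
  rw [q_succ_eq_sum, ← sum_div, hsum]
  field_simp

lemma mul_p_add_three (m : ℕ) : ((m : ℝ) + 3) * p (m + 3) = 2 + 2 * s m / ((m : ℝ) + 1) := by
  rw [p_add_two, q_succ]
  push_cast
  field_simp
  ring

lemma s_add_three (m : ℕ) : s (m + 3) = s (m + 2) + 2 + 2 * s m / ((m : ℝ) + 1) := by
  rw [add_assoc (s (m + 2)), ← mul_p_add_three, s, s, sum_Icc_succ_top (by omega : 1 ≤ m + 3)]
  push_cast
  ring

/-- For every `k ≥ 3`,
`a k = (a (k-1) * k * (k+5) + 2 * a (k-3) * (k+3)) / ((k+6) * (k+1))`;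
in particular `a k` is a weighted average of `a (k-1)` and `a (k-3)`. -/
theorem a_weighted_average (k : ℕ) (hk : 3 ≤ k) :
    a k = (a (k - 1) * (k : ℝ) * ((k : ℝ) + 5) + 2 * a (k - 3) * ((k : ℝ) + 3)) /
      (((k : ℝ) + 6) * ((k : ℝ) + 1)) := by
  obtain ⟨m, rfl⟩ := Nat.exists_eq_add_of_le' hk
  rw [show m + 3 - 1 = m + 2 from rfl, Nat.add_sub_cancel, a, a, a, s_add_three]
  push_cast
  field_simp
  ring
end

section
/- (Proposition 3.3, even-index bound) For every integer l ≥ 0, b(2l) ≤ 2^l / (21·(l+1)!). -/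
lemma p_one : p 1 = 0 := by
  show (pq 1).1 = 0
  rw [pq]

lemma p_two : p 2 = 1/2 := by
  show (pq 2).1 = 1/2
  rw [show (2:ℕ) = 0+2 from rfl, pq]
  norm_num

lemma sum_shift (n : ℕ) (f : ℕ → ℝ) :
    ∑ i ∈ Finset.Icc 1 n, f (i - 1) = ∑ j ∈ Finset.range n, f j := by
  rw [← Finset.Ico_add_one_right_eq_Icc, Finset.sum_Ico_eq_sum_range]
  simp

lemma sum_reflect (n : ℕ) (f : ℕ → ℝ) :
    ∑ i ∈ Finset.Icc 1 n, f (n - i) = ∑ j ∈ Finset.range n, f j := by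
  rw [← Finset.Ico_add_one_right_eq_Icc, Finset.sum_Ico_eq_sum_range]
  simp only [Nat.add_sub_cancel]
  conv_rhs => rw [← Finset.sum_range_reflect]
  apply Finset.sum_congr rfl
  intro i hi
  congr 1
  omega

lemma s_eq_range (n : ℕ) : s n = ∑ j ∈ Finset.range (n+1), (j:ℝ) * p j := by
  rw [s, ← Finset.Ico_add_one_right_eq_Icc, Finset.sum_Ico_eq_sum_range, Finset.sum_range_succ']
  simp only [Nat.succ_sub_one, Nat.cast_zero, zero_mul, add_zero]
  apply Finset.sum_congr rfl
  intro i hi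
  congr 2 <;> omega

lemma q_eq (n : ℕ) (hn : 1 ≤ n) :
    q n = (2 * s (n-1) + (n:ℝ)) / (n:ℝ)^2 := by
  match n, hn with
  | 1, _ =>
    show (pq 1).2 = _
    rw [pq]
    rw [Finset.sum_attach (Finset.Icc 1 1) (fun x => (((x-1 : ℕ) : ℝ) * (pq (x-1)).1 +
          ((1 - x : ℕ) : ℝ) * (pq (1 - x)).1 + 1) / ((1:ℕ) : ℝ))]
    norm_num [s, pq]
  | (m+2), _ =>
    show (pq (m+2)).2 = _
    rw [pq]
    rw [Finset.sum_attach (Finset.Icc 1 (m+2)) (fun x => (((x-1 : ℕ) : ℝ) * (pq (x-1)).1 +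
          ((m + 2 - x : ℕ) : ℝ) * (pq (m + 2 - x)).1 + 1) / ((m : ℝ) + 2))]
    have e1 : ∑ x ∈ Finset.Icc 1 (m+2), (((x-1 : ℕ) : ℝ) * (pq (x-1)).1 +
          ((m + 2 - x : ℕ) : ℝ) * (pq (m + 2 - x)).1 + 1) / ((m : ℝ) + 2)
        = (∑ x ∈ Finset.Icc 1 (m+2), (((x-1 : ℕ) : ℝ) * p (x-1))
          + ∑ x ∈ Finset.Icc 1 (m+2), (((m + 2 - x : ℕ) : ℝ) * p (m + 2 - x))
          + (m+2)) / ((m:ℝ)+2) := by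
      rw [← Finset.sum_div, Finset.sum_add_distrib, Finset.sum_add_distrib, Finset.sum_const,
        Nat.card_Icc]
      simp only [p, nsmul_eq_mul]
      push_cast
      ring
    rw [e1, sum_shift (m+2) (fun x => (x:ℝ) * p x), sum_reflect (m+2) (fun x => (x:ℝ) * p x),
      show m+2-1 = m+1 from rfl, s_eq_range]
    push_cast
    have h2 : ((m:ℝ)+2) ≠ 0 := by positivity
    field_simp
    ring

lemma p_eq (n : ℕ) : p (n+3) = 2/((n:ℝ)+3) + 2 * s n / (((n:ℝ)+3)*((n:ℝ)+1)) := by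
  have hq : q (n+1) = (2 * s n + ((n:ℝ)+1)) / ((n:ℝ)+1)^2 := by
    have := q_eq (n+1) (by omega)
    rw [show n+1-1 = n from rfl] at this
    push_cast at this
    exact this
  show (pq (n+3)).1 = _
  rw [show n+3 = (n+1)+2 from rfl, pq]
  rw [show (pq (n+1)).2 = q (n+1) from rfl, hq]
  have h1 : ((n:ℝ)+1) ≠ 0 := by positivity
  have h3 : ((n:ℝ)+3) ≠ 0 := by positivity
  push_cast
  field_simp
  ring

lemma s_rec (n : ℕ) : s (n+3) = s (n+2) + ((n:ℝ)+3) * p (n+3) := by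
  rw [s, s, show n+3 = (n+2)+1 from rfl, Finset.sum_Icc_succ_top (by omega : 1 ≤ n+2+1)]
  push_cast
  ring

noncomputable def bet (n : ℕ) : ℝ := 2*((n:ℝ)+6)/(((n:ℝ)+4)*((n:ℝ)+9))

lemma a_rec (n : ℕ) : a (n+3) = (1 - bet n) * a (n+2) + bet n * a n := by
  have hs := s_rec n
  rw [p_eq n] at hs
  rw [a, a, a, bet, hs]
  have h1 : ((n:ℝ)+1) ≠ 0 := by positivity
  have h3 : ((n:ℝ)+3) ≠ 0 := by positivity
  have h4 : ((n:ℝ)+4) ≠ 0 := by positivity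
  have h9 : ((n:ℝ)+9) ≠ 0 := by positivity
  have d0 : (n:ℝ)^2 + 7*(n:ℝ) + 6 ≠ 0 := by positivity
  have d2 : ((n:ℝ)+2)^2 + 7*((n:ℝ)+2) + 6 ≠ 0 := by positivity
  have d3 : ((n:ℝ)+3)^2 + 7*((n:ℝ)+3) + 6 ≠ 0 := by positivity
  push_cast
  field_simp
  ring

lemma bet_nonneg (n : ℕ) : 0 ≤ bet n := by
  rw [bet]; positivity

lemma bet_le_one (n : ℕ) : bet n ≤ 1 := by
  rw [bet, div_le_one (by positivity)]
  nlinarith [Nat.cast_nonneg (α := ℝ) n]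

lemma b_nonneg (k : ℕ) : 0 ≤ b k := le_trans (abs_nonneg _) (le_max_left _ _)

lemma b_step (k : ℕ) : b (k+2) ≤ (bet k + bet (k+1)) * b k := by
  have h3 := a_rec k
  have h4 := a_rec (k+1)
  have hb1 := bet_nonneg k
  have hb2 := bet_nonneg (k+1)
  have hb1' := bet_le_one k
  have hbk := b_nonneg k
  have hAB : |a k - a (k+1)| ≤ b k := le_max_left _ _
  have hBC : |a (k+1) - a (k+2)| ≤ b k := le_trans (le_max_left _ _) (le_max_right _ _)
  have hAC : |a k - a (k+2)| ≤ b k := le_trans (le_max_right _ _) (le_max_right _ _)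
  have hCD : |a (k+2) - a (k+3)| ≤ bet k * b k := by
    have e : a (k+2) - a (k+3) = bet k * (a (k+2) - a k) := by rw [h3]; ring
    rw [e, abs_mul, abs_of_nonneg hb1]
    have : |a (k+2) - a k| ≤ b k := by rwa [abs_sub_comm]
    exact mul_le_mul_of_nonneg_left this hb1
  have hDE : |a (k+3) - a (k+4)| ≤ bet (k+1) * b k := by
    have e : a (k+3) - a (k+4) = bet (k+1) *
        ((1 - bet k) * (a (k+2) - a (k+1)) + bet k * (a k - a (k+1))) := by
      rw [show k+1+3 = k+4 from rfl, show k+1+2 = k+3 from rfl] at h4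
      rw [h4, h3]; ring
    rw [e, abs_mul, abs_of_nonneg hb2]
    apply mul_le_mul_of_nonneg_left _ hb2
    calc |(1 - bet k) * (a (k+2) - a (k+1)) + bet k * (a k - a (k+1))|
        ≤ |(1 - bet k) * (a (k+2) - a (k+1))| + |bet k * (a k - a (k+1))| := abs_add_le _ _
      _ = (1 - bet k) * |a (k+2) - a (k+1)| + bet k * |a k - a (k+1)| := by
          rw [abs_mul, abs_mul, abs_of_nonneg hb1, abs_of_nonneg (by linarith)]
      _ ≤ (1 - bet k) * b k + bet k * b k := by
          have : |a (k+2) - a (k+1)| ≤ b k := by rwa [abs_sub_comm]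
          apply add_le_add
          · exact mul_le_mul_of_nonneg_left this (by linarith)
          · exact mul_le_mul_of_nonneg_left hAB hb1
      _ = b k := by ring
  have hCE : |a (k+2) - a (k+4)| ≤ (bet k + bet (k+1)) * b k := by
    calc |a (k+2) - a (k+4)| ≤ |a (k+2) - a (k+3)| + |a (k+3) - a (k+4)| := abs_sub_le _ _ _
      _ ≤ bet k * b k + bet (k+1) * b k := add_le_add hCD hDE
      _ = (bet k + bet (k+1)) * b k := by ring
  rw [b, show k+2+1 = k+3 from rfl, show k+2+2 = k+4 from rfl]
  apply max_le
  · calc |a (k+2) - a (k+3)| ≤ bet k * b k := hCD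
      _ ≤ (bet k + bet (k+1)) * b k := by nlinarith
  · apply max_le
    · calc |a (k+3) - a (k+4)| ≤ bet (k+1) * b k := hDE
        _ ≤ (bet k + bet (k+1)) * b k := by nlinarith
    · exact hCE

lemma bet_sum (l : ℕ) : bet (2*l) + bet (2*l+1) ≤ 2 / ((l:ℝ)+2) := by
  have hx : (0:ℝ) ≤ (l:ℝ) := Nat.cast_nonneg l
  have h2 : (0:ℝ) ≤ (l:ℝ)^2 := by positivity
  have h3 : (0:ℝ) ≤ (l:ℝ)^3 := by positivity
  have h4 : (0:ℝ) ≤ (l:ℝ)^4 := by positivity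
  have h5 : (0:ℝ) ≤ (l:ℝ)^5 := by positivity
  rw [bet, bet]
  push_cast
  rw [div_add_div _ _ (by positivity) (by positivity), div_le_div_iff₀ (by positivity) (by positivity)]
  nlinarith [mul_nonneg h2 h3]

lemma s_zero : s 0 = 0 := by simp [s]
lemma s_one : s 1 = 0 := by simp [s, p_one]
lemma s_two : s 2 = 1 := by
  rw [s, show (2:ℕ) = 1+1 from rfl, Finset.sum_Icc_succ_top (by omega)]
  simp [p_one, p_two]

lemma b_zero : b 0 = 1/21 := by
  have ha0 : a 0 = 1/3 := by rw [a, s_zero]; norm_num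
  have ha1 : a 1 = 2/7 := by rw [a, s_one]; norm_num
  have ha2 : a 2 = 7/24 := by rw [a, s_two]; norm_num
  rw [b, ha0, ha1, ha2]
  rw [show (1:ℝ)/3 - 2/7 = 1/21 by norm_num, show (2:ℝ)/7 - 7/24 = -(1/168) by norm_num,
    show (1:ℝ)/3 - 7/24 = 1/24 by norm_num]
  rw [abs_of_nonneg (by norm_num), abs_neg, abs_of_nonneg (by norm_num),
    abs_of_nonneg (by norm_num)]
  norm_num

/-- Proposition 3.3 (even-index bound): for every `l ≥ 0`,
`b (2l) ≤ 2^l / (21 * (l+1)!)`. -/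
theorem b_even_bound (l : ℕ) :
    b (2 * l) ≤ (2 : ℝ) ^ l / (21 * ((l + 1).factorial : ℝ)) := by
  induction l with
  | zero => rw [b_zero]; norm_num
  | succ m ih =>
    have h1 : b (2*m+2) ≤ (bet (2*m) + bet (2*m+1)) * b (2*m) := b_step (2*m)
    have h2 := bet_sum m
    have hbk := b_nonneg (2*m)
    have hfac : (0:ℝ) < ((m+1).factorial : ℝ) := by positivity
    have hm2 : (0:ℝ) < (m:ℝ)+2 := by positivity
    calc b (2*(m+1)) = b (2*m+2) := by ring_nf
      _ ≤ (bet (2*m) + bet (2*m+1)) * b (2*m) := h1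
      _ ≤ (2/((m:ℝ)+2)) * b (2*m) := mul_le_mul_of_nonneg_right h2 hbk
      _ ≤ (2/((m:ℝ)+2)) * ((2:ℝ)^m / (21 * ((m+1).factorial : ℝ))) :=
          mul_le_mul_of_nonneg_left ih (by positivity)
      _ = (2:ℝ)^(m+1) / (21 * ((m+1+1).factorial : ℝ)) := by
          have hF : ((m+1).factorial : ℝ) ≠ 0 := by positivity
          have hE : ((m+1+1).factorial : ℝ) = ((m:ℝ)+2) * ((m+1).factorial : ℝ) := by
            rw [show m+1+1 = (m+1)+1 from rfl, Nat.factorial_succ]; push_cast; ring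
          rw [hE, pow_succ]
          field_simp
end
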